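/- arXiv:1208.6184 — 2 statements merged into one kernel-verified Lean document; each statement's English description precedes it below -/
import Mathlib

section
/- Let k : ℝⁿ × ℝⁿ → ℝ be a measurable kernel for which there exist C, δ > 0 such that |k(x,y) − k(x',y)| ≤ C·|x − x'|^δ / |x − y|^{n+δ} whenever x, x' ∈ Q and y ∈ (2Q)^c for some cube Q. Let T be a linear operator on integrable functions such that: (1) T is of weak type (1,1), i.e. |{x : |Tg(x)| > λ}| ≤ C‖g‖_{L¹}/λ for all λ > 0; and (2) whenever g is integrable and x lies outside the support of g, Tg(x) = ∫ k(x,y) g(y) dy. Then for every 0 < s ≤ 1/2 there is a constant c (depending on n, δ, s and the constants of T) such that for every cube Q₀ ⊂ ℝⁿ, every integrable f, and every x ∈ Q₀, M♯_{0,s,Q₀}(Tf)(x) ≤ c · sup_{x ∈ Q, Q ⊂ Q₀} inf_{y ∈ Q} Mf(y). -/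
open MeasureTheory ENNReal

namespace LocalMedian

/-- Euclidean space `ℝⁿ`. -/
abbrev Sp (n : ℕ) := EuclideanSpace ℝ (Fin n)

/-- An axis-parallel cube in `ℝⁿ`, given by its lower corner and (positive) sidelength. -/
structure Cube (n : ℕ) where
  corner : Sp n
  side : ℝ
  side_pos : 0 < side

namespace Cube

variable {n : ℕ}

/-- The set of points of the cube. -/
def set (Q : Cube n) : Set (Sp n) :=
  {x | ∀ i, Q.corner i ≤ x i ∧ x i ≤ Q.corner i + Q.side}

/-- The center of the cube. -/
noncomputable def center (Q : Cube n) : Sp n := WithLp.toLp 2 (fun i => Q.corner i + Q.side / 2)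

/-- The cube concentric with `Q` whose sidelength is `r` times that of `Q`. -/
noncomputable def dilate (Q : Cube n) (r : ℝ) (hr : 0 < r) : Cube n where
  corner := WithLp.toLp 2 (fun i => Q.center i - r * Q.side / 2)
  side := r * Q.side
  side_pos := mul_pos hr Q.side_pos

/-- `Q` is a dyadic subcube of `Q₀`, i.e. obtained from `Q₀` by repeated dyadic
subdivision into `2ⁿ` congruent subcubes. -/
def dyadicSub (Q₀ Q : Cube n) : Prop :=
  ∃ (k : ℕ) (m : Fin n → ℕ), (∀ i, m i < 2 ^ k) ∧
    Q.side = Q₀.side / 2 ^ k ∧ ∀ i, Q.corner i = Q₀.corner i + Q.side * m i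

/-- `Q` is one of the `2ⁿ` dyadic children of `P` (so `P` is the dyadic parent of `Q`). -/
def isDyadicChild (Q P : Cube n) : Prop :=
  Q.side = P.side / 2 ∧ ∃ m : Fin n → ℕ, (∀ i, m i < 2) ∧
    ∀ i, Q.corner i = P.corner i + Q.side * m i

end Cube

variable {n : ℕ}

/-- The (maximal) median of `f` over the cube `Q` with parameter `t`:
`m_f(t,Q) = sup { M : |{y ∈ Q : f y < M}| ≤ t|Q| }`. -/
noncomputable def median (f : Sp n → ℝ) (t : ℝ) (Q : Cube n) : ℝ :=
  sSup {M : ℝ | volume {y ∈ Q.set | f y < M} ≤ ENNReal.ofReal t * volume Q.set}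

/-- The local oscillation `inf_c inf {α ≥ 0 : |{y ∈ Q : |f y - c| > α}| < s|Q|}`. -/
noncomputable def osc (f : Sp n → ℝ) (s : ℝ) (Q : Cube n) : ℝ :=
  ⨅ c : ℝ, sInf {α : ℝ | 0 ≤ α ∧
    volume {y ∈ Q.set | α < |f y - c|} < ENNReal.ofReal s * volume Q.set}

/-- The local sharp maximal function `M♯_{0,s,Q₀} f`, restricted to the cube `Q₀`. -/
noncomputable def sharpLoc (f : Sp n → ℝ) (s : ℝ) (Q₀ : Cube n) (x : Sp n) : ℝ≥0∞ :=
  ⨆ Q : {Q : Cube n // x ∈ Q.set ∧ Q.set ⊆ Q₀.set}, ENNReal.ofReal (osc f s Q.1)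

/-- The local sharp maximal function `M♯_{0,s} f` (over all cubes containing `x`). -/
noncomputable def sharp (f : Sp n → ℝ) (s : ℝ) (x : Sp n) : ℝ≥0∞ :=
  ⨆ Q : {Q : Cube n // x ∈ Q.set}, ENNReal.ofReal (osc f s Q.1)

/-- The Hardy–Littlewood maximal function (over cubes containing `x`). -/
noncomputable def maximal (f : Sp n → ℝ) (x : Sp n) : ℝ≥0∞ :=
  ⨆ Q : {Q : Cube n // x ∈ Q.set},
    (∫⁻ y in Q.1.set, ENNReal.ofReal |f y|) / volume Q.1.set

/-- The Hardy–Littlewood maximal function of an `ℝ≥0∞`-valued function. -/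
noncomputable def maximalE (g : Sp n → ℝ≥0∞) (x : Sp n) : ℝ≥0∞ :=
  ⨆ Q : {Q : Cube n // x ∈ Q.set}, (∫⁻ y in Q.1.set, g y) / volume Q.1.set

/-- The average `(1/|Q|) ∫_Q g`. -/
noncomputable def cubeAvg (g : Sp n → ℝ) (Q : Cube n) : ℝ :=
  (volume Q.set).toReal⁻¹ * ∫ y in Q.set, g y

/-- The Fefferman–Stein sharp maximal function
`M♯ g(x) = sup_{Q ∋ x} (1/|Q|) ∫_Q |g - g_Q|`. -/
noncomputable def fsSharp (g : Sp n → ℝ) (x : Sp n) : ℝ≥0∞ :=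
  ⨆ Q : {Q : Cube n // x ∈ Q.set},
    ENNReal.ofReal (cubeAvg (fun y => |g y - cubeAvg g Q.1|) Q.1)

/-!
Fix a cube `Q ∋ x`, a point `y ∈ Q`, put `A = Mf(y)` and split `f = f·1_{2Q} + f·1_{(2Q)ᶜ}`.
On the dyadic annulus `2^{j+2}Q \ 2^{j+1}Q` the kernel difference `k(z,·) - k(z_Q,·)` is
`O(2^{-jδ} / |2^{j+2}Q|)` while `|f|` has integral at most `A |2^{j+2}Q|`, so summing the
geometric series shows that the far part `T(f·1_{(2Q)ᶜ})` stays within `O(A)` of its value at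
the centre `z_Q` on all of `Q`. The weak type (1,1) bound together with `‖f·1_{2Q}‖₁ ≤ A|2Q|`
makes `{|T(f·1_{2Q})| > cA/2}` smaller than `s|Q|` once `c ≳ 2ⁿ CT / s`. Hence `Tf` stays within
`cA` of the constant `T(f·1_{(2Q)ᶜ})(z_Q)` off a set of measure `< s|Q|`.
-/

lemma enorm_integral_sub_integral_le {α E : Type*} [MeasurableSpace α] {μ : Measure α}
    [NormedAddCommGroup E] [NormedSpace ℝ E] {F G : α → E}
    (h : AEStronglyMeasurable (fun x => F x - G x) μ) :
    ‖∫ x, F x ∂μ - ∫ x, G x ∂μ‖ₑ ≤ ∫⁻ x, ‖F x - G x‖ₑ ∂μ := by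
  by_cases hfin : ∫⁻ x, ‖F x - G x‖ₑ ∂μ = ⊤
  · simp [hfin]
  have hFG : Integrable (fun x => F x - G x) μ := ⟨h, lt_top_iff_ne_top.2 hfin⟩
  by_cases hG : Integrable G μ
  · have hF : Integrable F μ := (hFG.add hG).congr (ae_of_all _ fun x => sub_add_cancel (F x) (G x))
    rw [← integral_sub hF hG]
    exact enorm_integral_le_lintegral_enorm _
  · have hF : ¬ Integrable F μ := fun hF =>
      hG ((hF.sub hFG).congr (ae_of_all _ fun x => sub_sub_cancel (F x) (G x)))
    simp [integral_undef hF, integral_undef hG]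

namespace Cube

lemma mem_set_iff (Q : Cube n) (x : Sp n) :
    x ∈ Q.set ↔ ∀ i, |x i - Q.center i| ≤ Q.side / 2 := by
  simp only [set, center, Set.mem_ofPred_eq, abs_le, PiLp.toLp_apply]
  exact forall_congr' fun i => by constructor <;> intro h <;> constructor <;> linarith [h.1, h.2]

lemma mem_dilate_iff (Q : Cube n) {r : ℝ} (hr : 0 < r) (x : Sp n) :
    x ∈ (Q.dilate r hr).set ↔ ∀ i, |x i - Q.center i| ≤ r * Q.side / 2 := by
  simp only [set, dilate, Set.mem_ofPred_eq, abs_le, PiLp.toLp_apply]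
  exact forall_congr' fun i => by constructor <;> intro h <;> constructor <;> linarith [h.1, h.2]

lemma center_dilate (Q : Cube n) {r : ℝ} (hr : 0 < r) : (Q.dilate r hr).center = Q.center := by
  ext i
  simp only [center, dilate, PiLp.toLp_apply]
  ring

lemma center_mem (Q : Cube n) : Q.center ∈ Q.set :=
  (Q.mem_set_iff _).2 fun i => by simpa using (half_pos Q.side_pos).le

lemma dilate_subset_dilate (Q : Cube n) {r r' : ℝ} (hr : 0 < r) (hr' : 0 < r') (h : r ≤ r') :
    (Q.dilate r hr).set ⊆ (Q.dilate r' hr').set := fun x hx => by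
  rw [mem_dilate_iff] at hx ⊢
  exact fun i => (hx i).trans (by gcongr; exact Q.side_pos.le)

lemma set_subset_dilate (Q : Cube n) {r : ℝ} (hr : 0 < r) (h : 1 ≤ r) :
    Q.set ⊆ (Q.dilate r hr).set := fun x hx => by
  rw [mem_set_iff] at hx
  rw [mem_dilate_iff]
  exact fun i => (hx i).trans (by nlinarith [Q.side_pos])

lemma dilate_dilate_subset (Q : Cube n) {r r' : ℝ} (hr : 0 < r) (hr' : 0 < r') :
    ((Q.dilate r hr).dilate r' hr').set ⊆ (Q.dilate (r' * r) (mul_pos hr' hr)).set :=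
  fun x hx => by
  rw [mem_dilate_iff, center_dilate] at hx
  rw [mem_dilate_iff]
  exact fun i => (hx i).trans_eq (by simp only [dilate]; ring)

lemma set_eq_preimage (Q : Cube n) :
    Q.set = (MeasurableEquiv.toLp 2 (Fin n → ℝ)).symm ⁻¹'
      Set.univ.pi fun i => Set.Icc (Q.corner i) (Q.corner i + Q.side) := by
  ext x
  simp only [set, Set.mem_preimage, Set.mem_univ_pi, Set.mem_Icc, Set.mem_ofPred_eq]
  rfl

lemma measurableSet_set (Q : Cube n) : MeasurableSet Q.set := by
  rw [set_eq_preimage]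
  exact (MeasurableSet.univ_pi fun _ => measurableSet_Icc).preimage (MeasurableEquiv.measurable _)

lemma volume_set (Q : Cube n) : volume Q.set = ENNReal.ofReal (Q.side ^ n) := by
  rw [set_eq_preimage,
    (EuclideanSpace.volume_preserving_symm_measurableEquiv_toLp (Fin n)).measure_preimage
      (MeasurableSet.univ_pi fun _ => measurableSet_Icc).nullMeasurableSet, volume_pi_pi]
  simp [Real.volume_Icc, ENNReal.ofReal_pow Q.side_pos.le]

lemma volume_set_pos (Q : Cube n) : 0 < volume Q.set := by
  rw [volume_set]
  exact ENNReal.ofReal_pos.2 (pow_pos Q.side_pos n)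

lemma volume_set_ne_top (Q : Cube n) : volume Q.set ≠ ⊤ := by
  rw [volume_set]
  exact ENNReal.ofReal_ne_top

lemma abs_apply_sub_le_norm (x y : Sp n) (i : Fin n) : |x i - y i| ≤ ‖x - y‖ := by
  simpa using PiLp.norm_apply_le (x - y) i

lemma norm_sub_le_of_mem (Q : Cube n) {z x : Sp n} (hz : z ∈ Q.set) (hx : x ∈ Q.set) :
    ‖z - x‖ ≤ √n * Q.side := by
  have hcoord : ∀ i, ‖(z - x) i‖ ^ 2 ≤ Q.side ^ 2 := fun i => by
    have hz := (Q.mem_set_iff z).1 hz i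
    have hx := (Q.mem_set_iff x).1 hx i
    rw [PiLp.sub_apply, Real.norm_eq_abs, sq_le_sq, abs_abs, abs_of_pos Q.side_pos]
    linarith [abs_sub_le (z i) (Q.center i) (x i), abs_sub_comm (Q.center i) (x i)]
  calc ‖z - x‖ = √(∑ i, ‖(z - x) i‖ ^ 2) := EuclideanSpace.norm_eq _
    _ ≤ √(∑ _i : Fin n, Q.side ^ 2) := Real.sqrt_le_sqrt (Finset.sum_le_sum fun i _ => hcoord i)
    _ = √n * Q.side := by
      rw [Finset.sum_const, Finset.card_univ, Fintype.card_fin, nsmul_eq_mul,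
        Real.sqrt_mul (Nat.cast_nonneg n), Real.sqrt_sq Q.side_pos.le]

lemma lt_norm_sub_of_notMem_dilate (Q : Cube n) {r : ℝ} (hr : 0 < r) {z w : Sp n}
    (hz : z ∈ Q.set) (hw : w ∉ (Q.dilate r hr).set) : (r - 1) * Q.side / 2 < ‖z - w‖ := by
  rw [mem_dilate_iff] at hw
  push Not at hw
  obtain ⟨i, hi⟩ := hw
  have hzi := (Q.mem_set_iff z).1 hz i
  calc (r - 1) * Q.side / 2 < |w i - Q.center i| - |z i - Q.center i| := by linarith
    _ ≤ |(z i - Q.center i) - (w i - Q.center i)| := by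
      rw [abs_sub_comm (z i - _)]; exact abs_sub_abs_le_abs_sub _ _
    _ = |z i - w i| := by ring_nf
    _ ≤ ‖z - w‖ := abs_apply_sub_le_norm z w i

lemma set_subset_interior_dilate (Q : Cube n) {r : ℝ} (hr : 0 < r) (h : 1 < r) :
    Q.set ⊆ interior (Q.dilate r hr).set := fun z hz => by
  rw [mem_interior_iff_mem_nhds, Metric.mem_nhds_iff]
  refine ⟨(r - 1) * Q.side / 2, by nlinarith [Q.side_pos], fun w hw => ?_⟩
  rw [Metric.mem_ball, dist_eq_norm] at hw
  rw [mem_dilate_iff]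
  intro i
  calc |w i - Q.center i| ≤ |w i - z i| + |z i - Q.center i| := abs_sub_le _ _ _
    _ ≤ r * Q.side / 2 := by
      linarith [abs_apply_sub_le_norm w z i, (Q.mem_set_iff z).1 hz i]

lemma exists_mem_dilate_two_pow (Q : Cube n) (w : Sp n) :
    ∃ m : ℕ, w ∈ (Q.dilate (2 ^ (m + 1)) (by positivity)).set := by
  obtain ⟨m, hm⟩ := pow_unbounded_of_one_lt (2 * ‖w - Q.center‖ / Q.side) one_lt_two
  refine ⟨m, (Q.mem_dilate_iff _ w).2 fun i => ?_⟩
  rw [div_lt_iff₀ Q.side_pos] at hm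
  have : (2 : ℝ) ^ m ≤ 2 ^ (m + 1) := pow_le_pow_right₀ one_le_two m.le_succ
  nlinarith [abs_apply_sub_le_norm w Q.center i, Q.side_pos]

def annulus (Q : Cube n) (j : ℕ) : Set (Sp n) :=
  (Q.dilate (2 ^ (j + 2)) (by positivity)).set \ (Q.dilate (2 ^ (j + 1)) (by positivity)).set

lemma measurableSet_annulus (Q : Cube n) (j : ℕ) : MeasurableSet (Q.annulus j) :=
  (measurableSet_set _).diff (measurableSet_set _)

lemma compl_dilate_two_subset_iUnion_annulus (Q : Cube n) :
    (Q.dilate 2 two_pos).setᶜ ⊆ ⋃ j : ℕ, Q.annulus j := by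
  classical
  intro w hw
  have hex := Q.exists_mem_dilate_two_pow w
  obtain ⟨j, hj⟩ : ∃ j, Nat.find hex = j + 1 := Nat.exists_eq_succ_of_ne_zero fun h0 =>
    hw (Q.dilate_subset_dilate _ _ (by norm_num) (h0 ▸ Nat.find_spec hex))
  refine Set.mem_iUnion.2 ⟨j, ?_, Nat.find_min hex (by omega)⟩
  simpa [hj] using Nat.find_spec hex

end Cube

lemma lintegral_le_maximal_mul_volume (f : Sp n → ℝ) {P : Cube n} {y : Sp n} (hy : y ∈ P.set) :
    ∫⁻ w in P.set, ENNReal.ofReal |f w| ≤ maximal f y * volume P.set :=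
  (ENNReal.div_le_iff_le_mul (Or.inl P.volume_set_pos.ne') (Or.inl P.volume_set_ne_top)).1 <|
    le_iSup (fun Q : {Q : Cube n // y ∈ Q.set} =>
      (∫⁻ w in Q.1.set, ENNReal.ofReal |f w|) / volume Q.1.set) ⟨P, hy⟩

lemma osc_le {f : Sp n → ℝ} {s α : ℝ} {Q : Cube n} (hα : 0 ≤ α) (c : ℝ)
    (h : volume {y ∈ Q.set | α < |f y - c|} < ENNReal.ofReal s * volume Q.set) :
    osc f s Q ≤ α :=
  (ciInf_le ⟨0, by rintro _ ⟨c', rfl⟩; exact Real.sInf_nonneg fun a ha => ha.1⟩ c).trans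
    (csInf_le ⟨0, fun a ha => ha.1⟩ ⟨hα, h⟩)

def IsHolderKernel (k : Sp n → Sp n → ℝ) (C δ : ℝ) : Prop :=
  ∀ (Q : Cube n), ∀ x ∈ Q.set, ∀ x' ∈ Q.set, ∀ y ∉ (Q.dilate 2 two_pos).set,
    |k x y - k x' y| ≤ C * ‖x - x'‖ ^ δ / ‖x - y‖ ^ ((n : ℝ) + δ)

def IsWeakTypeOneOne (T : (Sp n → ℝ) → (Sp n → ℝ)) (CT : ℝ) : Prop :=
  ∀ g : Sp n → ℝ, Integrable g → ∀ lam : ℝ, 0 < lam →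
    volume {x | ENNReal.ofReal lam < ENNReal.ofReal |T g x|}
      ≤ ENNReal.ofReal CT * (∫⁻ x, ENNReal.ofReal |g x|) / ENNReal.ofReal lam

def HasKernelOffSupport (T : (Sp n → ℝ) → (Sp n → ℝ)) (k : Sp n → Sp n → ℝ) : Prop :=
  ∀ g : Sp n → ℝ, Integrable g → ∀ x ∉ tsupport g, T g x = ∫ y, k x y * g y

noncomputable def tailConst (n : ℕ) (C δ : ℝ) : ℝ :=
  C * √n ^ δ * 2 ^ (3 * (n : ℝ) + δ) * (1 - 2 ^ (-δ))⁻¹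

noncomputable def sharpConst (n : ℕ) (C δ CT s : ℝ) : ℝ :=
  2 * tailConst n C δ + 2 ^ (n + 2) * max CT 1 / s

lemma tailConst_nonneg {C δ : ℝ} (hC : 0 ≤ C) (hδ : 0 < δ) : 0 ≤ tailConst n C δ := by
  have : (2 : ℝ) ^ (-δ) < 1 := Real.rpow_lt_one_of_one_lt_of_neg one_lt_two (neg_neg_of_pos hδ)
  unfold tailConst
  have : 0 ≤ (1 - (2 : ℝ) ^ (-δ))⁻¹ := inv_nonneg.2 (by linarith)
  positivity

lemma sharpConst_pos {C δ CT s : ℝ} (hC : 0 ≤ C) (hδ : 0 < δ) (hs : 0 < s) :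
    0 < sharpConst n C δ CT s := by
  have := tailConst_nonneg (n := n) hC hδ
  have : 0 < max CT 1 := lt_max_of_lt_right one_pos
  unfold sharpConst
  positivity

lemma annulus_const_eq {C δ L : ℝ} (hL : 0 < L) (j : ℕ) :
    C * (√n * L) ^ δ / (2 ^ j * L / 2) ^ ((n : ℝ) + δ) * (2 ^ (j + 2) * L) ^ n
      = C * √n ^ δ * 2 ^ (3 * (n : ℝ) + δ) * ((2 : ℝ) ^ (-δ)) ^ j := by
  have h2 : (0 : ℝ) < 2 := two_pos
  have hjδ : ((2 : ℝ) ^ j) ^ δ = ((2 : ℝ) ^ δ) ^ j := by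
    rw [← Real.rpow_natCast, ← Real.rpow_natCast, ← Real.rpow_mul h2.le, ← Real.rpow_mul h2.le,
      mul_comm]
  have hpow : ((2 : ℝ) ^ j * L / 2) ^ ((n : ℝ) + δ)
      = (2 ^ j * L / 2) ^ n * (((2 : ℝ) ^ δ) ^ j * L ^ δ / 2 ^ δ) := by
    rw [Real.rpow_add (by positivity), Real.rpow_natCast, Real.div_rpow (by positivity) h2.le,
      Real.mul_rpow (by positivity) hL.le, hjδ]
  have h8 : ((2 : ℝ) ^ (j + 2) * L) ^ n = (2 ^ j * L / 2) ^ n * 8 ^ n := by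
    rw [← mul_pow]; ring
  have h3 : (2 : ℝ) ^ (3 * (n : ℝ) + δ) = 8 ^ n * 2 ^ δ := by
    rw [Real.rpow_add h2, Real.rpow_mul h2.le]
    norm_num
  rw [hpow, h8, h3, Real.mul_rpow (Real.sqrt_nonneg _) hL.le, Real.rpow_neg h2.le, inv_pow]
  have : (0 : ℝ) < 2 ^ δ := Real.rpow_pos_of_pos h2 δ
  have : (0 : ℝ) < L ^ δ := Real.rpow_pos_of_pos hL δ
  field_simp

section Kernel

variable {k : Sp n → Sp n → ℝ} {C δ : ℝ}

lemma IsHolderKernel.abs_sub_le (hker : IsHolderKernel k C δ)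
    (hC : 0 ≤ C) (hδ : 0 ≤ δ) {P : Cube n} {z x₀ w : Sp n} (hz : z ∈ P.set) (hx₀ : x₀ ∈ P.set)
    (hw : w ∉ (P.dilate 2 two_pos).set) :
    |k z w - k x₀ w| ≤ C * ‖z - x₀‖ ^ δ / (P.side / 2) ^ ((n : ℝ) + δ) := by
  have hzw := P.lt_norm_sub_of_notMem_dilate two_pos hz hw
  have hP : 0 < P.side / 2 := half_pos P.side_pos
  refine (hker P z hz x₀ hx₀ w hw).trans ?_
  gcongr
  linarith

lemma IsHolderKernel.setLIntegral_annulus_le (hker : IsHolderKernel k C δ) (hC : 0 ≤ C)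
    (hδ : 0 ≤ δ) {Q : Cube n} {z x₀ y : Sp n} (hz : z ∈ Q.set) (hx₀ : x₀ ∈ Q.set)
    (hy : y ∈ Q.set) (f : Sp n → ℝ) (j : ℕ) :
    ∫⁻ w in Q.annulus j, ENNReal.ofReal (|k z w - k x₀ w| * |f w|)
      ≤ ENNReal.ofReal (C * √n ^ δ * 2 ^ (3 * (n : ℝ) + δ) * ((2 : ℝ) ^ (-δ)) ^ j)
        * maximal f y := by
  set P := Q.dilate (2 ^ j) (by positivity)
  set b := C * (√n * Q.side) ^ δ / (2 ^ j * Q.side / 2) ^ ((n : ℝ) + δ)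
  have hb : 0 ≤ b := by have := Q.side_pos; positivity
  have hQP : Q.set ⊆ P.set := Q.set_subset_dilate _ (one_le_pow₀ one_le_two)
  have hkb : ∀ w ∈ Q.annulus j,
      ENNReal.ofReal (|k z w - k x₀ w| * |f w|) ≤ ENNReal.ofReal b * ENNReal.ofReal |f w| := by
    rintro w ⟨-, hw⟩
    have hwP : w ∉ (P.dilate 2 two_pos).set := fun h =>
      hw (Q.dilate_subset_dilate _ _ (pow_succ' 2 j).ge (Q.dilate_dilate_subset _ _ h))
    rw [← ENNReal.ofReal_mul hb]
    refine ENNReal.ofReal_le_ofReal (mul_le_mul_of_nonneg_right ?_ (abs_nonneg _))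
    refine (hker.abs_sub_le hC hδ (hQP hz) (hQP hx₀) hwP).trans ?_
    exact div_le_div_of_nonneg_right (mul_le_mul_of_nonneg_left
      (Real.rpow_le_rpow (norm_nonneg _) (Q.norm_sub_le_of_mem hz hx₀) hδ) hC)
      (Real.rpow_pos_of_pos (half_pos P.side_pos) _).le
  have hyQ' : y ∈ (Q.dilate (2 ^ (j + 2)) (by positivity)).set :=
    Q.set_subset_dilate _ (one_le_pow₀ one_le_two) hy
  calc _ ≤ ∫⁻ w in Q.annulus j, ENNReal.ofReal b * ENNReal.ofReal |f w| :=
        setLIntegral_mono' (Q.measurableSet_annulus j) hkb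
    _ = ENNReal.ofReal b * ∫⁻ w in Q.annulus j, ENNReal.ofReal |f w| :=
        lintegral_const_mul' _ _ ENNReal.ofReal_ne_top
    _ ≤ ENNReal.ofReal b
          * (maximal f y * volume (Q.dilate (2 ^ (j + 2)) (by positivity)).set) := by
        gcongr
        exact (lintegral_mono_set Set.sdiff_subset).trans (lintegral_le_maximal_mul_volume f hyQ')
    _ = ENNReal.ofReal (b * (2 ^ (j + 2) * Q.side) ^ n) * maximal f y := by
        rw [Cube.volume_set, ENNReal.ofReal_mul hb]
        simp only [Cube.dilate]
        ring
    _ = _ := by rw [annulus_const_eq Q.side_pos]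

lemma IsHolderKernel.lintegral_compl_dilate_two_le (hker : IsHolderKernel k C δ) (hC : 0 ≤ C)
    (hδ : 0 < δ) {Q : Cube n} {z x₀ y : Sp n} (hz : z ∈ Q.set) (hx₀ : x₀ ∈ Q.set)
    (hy : y ∈ Q.set) (f : Sp n → ℝ) :
    ∫⁻ w in (Q.dilate 2 two_pos).setᶜ, ENNReal.ofReal (|k z w - k x₀ w| * |f w|)
      ≤ ENNReal.ofReal (tailConst n C δ) * maximal f y := by
  set ρ : ℝ := 2 ^ (-δ)
  have hρ0 : 0 ≤ ρ := by positivity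
  have hρ1 : ρ < 1 := Real.rpow_lt_one_of_one_lt_of_neg one_lt_two (neg_neg_of_pos hδ)
  have hK : 0 ≤ C * √n ^ δ * 2 ^ (3 * (n : ℝ) + δ) := by positivity
  calc _ ≤ ∫⁻ w in ⋃ j : ℕ, Q.annulus j, ENNReal.ofReal (|k z w - k x₀ w| * |f w|) :=
        lintegral_mono_set Q.compl_dilate_two_subset_iUnion_annulus
    _ ≤ ∑' j : ℕ, ENNReal.ofReal (C * √n ^ δ * 2 ^ (3 * (n : ℝ) + δ)) * ENNReal.ofReal ρ ^ j
          * maximal f y := by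
        refine (lintegral_iUnion_le _ _).trans (ENNReal.tsum_le_tsum fun j => ?_)
        rw [← ENNReal.ofReal_pow hρ0, ← ENNReal.ofReal_mul hK]
        exact hker.setLIntegral_annulus_le hC hδ.le hz hx₀ hy f j
    _ = ENNReal.ofReal (tailConst n C δ) * maximal f y := by
        rw [ENNReal.tsum_mul_right, ENNReal.tsum_mul_left, ENNReal.tsum_geometric, tailConst,
          ENNReal.ofReal_mul hK, ENNReal.ofReal_inv_of_pos (sub_pos.2 hρ1),
          ENNReal.ofReal_sub _ hρ0, ENNReal.ofReal_one]

end Kernel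

section Operator

open Topology

variable {T : (Sp n → ℝ) → (Sp n → ℝ)} {g : Sp n → ℝ}

lemma HasKernelOffSupport.enorm_sub_le {k : Sp n → Sp n → ℝ} (hrep : HasKernelOffSupport T k)
    (hkm : Measurable (Function.uncurry k)) {f : Sp n → ℝ} (hf : Integrable f) {s : Set (Sp n)}
    (hs : MeasurableSet s) {z x₀ : Sp n} (hz : s ∈ 𝓝 z) (hx₀ : s ∈ 𝓝 x₀) :
    ‖T (sᶜ.indicator f) z - T (sᶜ.indicator f) x₀‖ₑ
      ≤ ∫⁻ w in sᶜ, ENNReal.ofReal (|k z w - k x₀ w| * |f w|) := by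
  have hg := hf.indicator hs.compl
  have hoff : ∀ x, s ∈ 𝓝 x → x ∉ tsupport (sᶜ.indicator f) := fun x hx =>
    notMem_tsupport_iff_eventuallyEq.2 <|
      Filter.eventually_of_mem hx fun w hw => Set.indicator_of_notMem (not_not.2 hw) f
  have hk : ∀ x, Measurable (k x) := fun x => hkm.comp measurable_prodMk_left
  rw [hrep _ hg z (hoff z hz), hrep _ hg x₀ (hoff x₀ hx₀), ← lintegral_indicator hs.compl]
  refine (enorm_integral_sub_integral_le (((hk z).aestronglyMeasurable.mul hg.1).sub
    ((hk x₀).aestronglyMeasurable.mul hg.1))).trans_eq (lintegral_congr fun w => ?_)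
  by_cases hw : w ∈ sᶜ
  · simp only [Pi.mul_apply, Set.indicator_of_mem hw, ← sub_mul, Real.enorm_eq_ofReal_abs, abs_mul]
  · simp [Set.indicator_of_notMem hw]

lemma IsWeakTypeOneOne.volume_lt_abs_le {CT : ℝ} (hT : IsWeakTypeOneOne T CT)
    (hg : Integrable g) {lam : ℝ} (hlam : 0 < lam) :
    volume {x | lam < |T g x|}
      ≤ ENNReal.ofReal CT * (∫⁻ x, ENNReal.ofReal |g x|) / ENNReal.ofReal lam :=
  (measure_mono fun _ hx => (ENNReal.ofReal_lt_ofReal_iff (hlam.trans hx)).2 hx).trans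
    (hT g hg lam hlam)

lemma IsWeakTypeOneOne.volume_abs_pos_eq_zero {CT : ℝ} (hT : IsWeakTypeOneOne T CT)
    (hg : Integrable g) (h0 : ∫⁻ x, ENNReal.ofReal |g x| = 0) :
    volume {x | 0 < |T g x|} = 0 := by
  refine measure_mono_null
    (fun x hx => Set.mem_iUnion.2 (exists_nat_one_div_lt (show 0 < |T g x| from hx)))
    (measure_iUnion_null fun m => le_antisymm ?_ zero_le)
  exact (hT.volume_lt_abs_le hg (by positivity)).trans (by simp [h0])

lemma IsWeakTypeOneOne.volume_lt_abs_lt {CT : ℝ} (hT : IsWeakTypeOneOne T CT)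
    (hg : Integrable g) {Q : Cube n} {s c A : ℝ} (hs : 0 < s) (hA : 0 ≤ A)
    (hc : 2 ^ (n + 2) * max CT 1 / s ≤ c)
    (hgA : ∫⁻ x, ENNReal.ofReal |g x| ≤ ENNReal.ofReal A * volume (Q.dilate 2 two_pos).set) :
    volume {z | c * A / 2 < |T g z|} < ENNReal.ofReal s * volume Q.set := by
  have hsQ : 0 < ENNReal.ofReal s * volume Q.set :=
    ENNReal.mul_pos (ENNReal.ofReal_pos.2 hs).ne' Q.volume_set_pos.ne'
  rcases hA.eq_or_lt with rfl | hA
  · rw [mul_zero, zero_div,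
      hT.volume_abs_pos_eq_zero hg (le_antisymm (by simpa using hgA) zero_le)]
    exact hsQ
  have hCT : 0 < max CT 1 := lt_max_of_lt_right one_pos
  have hc0 : 0 < c := lt_of_lt_of_le (by positivity) hc
  have hlam : 0 < c * A / 2 := by positivity
  have hL := Q.side_pos
  calc _ ≤ ENNReal.ofReal CT * (∫⁻ x, ENNReal.ofReal |g x|) / ENNReal.ofReal (c * A / 2) :=
        hT.volume_lt_abs_le hg hlam
    _ ≤ ENNReal.ofReal (max CT 1) * (ENNReal.ofReal A * ENNReal.ofReal ((2 * Q.side) ^ n))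
          / ENNReal.ofReal (c * A / 2) := by
        gcongr
        · exact le_max_left CT 1
        · exact hgA.trans_eq (by rw [Cube.volume_set]; rfl)
    _ = ENNReal.ofReal (max CT 1 * (A * (2 * Q.side) ^ n) / (c * A / 2)) := by
        rw [← ENNReal.ofReal_mul hA.le, ← ENNReal.ofReal_mul hCT.le,
          ENNReal.ofReal_div_of_pos hlam]
    _ < ENNReal.ofReal (s * Q.side ^ n) := by
        refine (ENNReal.ofReal_lt_ofReal_iff (by positivity)).2 ?_
        have hcs := (div_le_iff₀ hs).1 hc
        rw [pow_add, div_lt_iff₀ hlam, mul_pow] at *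
        nlinarith [mul_le_mul_of_nonneg_right hcs (by positivity : (0 : ℝ) ≤ A * Q.side ^ n),
          mul_pos (mul_pos hCT hA) (mul_pos (pow_pos two_pos n) (pow_pos hL n))]
    _ = ENNReal.ofReal s * volume Q.set := by rw [Cube.volume_set, ENNReal.ofReal_mul hs.le]

theorem ofReal_osc_le_sharpConst_mul_maximal {k : Sp n → Sp n → ℝ}
    (hkm : Measurable (Function.uncurry k)) {C δ : ℝ} (hC : 0 ≤ C) (hδ : 0 < δ)
    (hker : IsHolderKernel k C δ)
    (hadd : ∀ g₁ g₂ : Sp n → ℝ, Integrable g₁ → Integrable g₂ → T (g₁ + g₂) = T g₁ + T g₂)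
    {CT : ℝ} (hT1 : IsWeakTypeOneOne T CT) (hT2 : HasKernelOffSupport T k) {s : ℝ} (hs : 0 < s)
    {Q : Cube n} {f : Sp n → ℝ} (hf : Integrable f) {y : Sp n} (hy : y ∈ Q.set) :
    ENNReal.ofReal (osc (T f) s Q) ≤ ENNReal.ofReal (sharpConst n C δ CT s) * maximal f y := by
  have hc := sharpConst_pos (n := n) (CT := CT) hC hδ hs
  by_cases htop : maximal f y = ⊤
  · rw [htop, ENNReal.mul_top (ENNReal.ofReal_pos.2 hc).ne']
    exact le_top
  set c := sharpConst n C δ CT s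
  set A := (maximal f y).toReal
  have hMA : maximal f y = ENNReal.ofReal A := (ENNReal.ofReal_toReal htop).symm
  have hA : 0 ≤ A := ENNReal.toReal_nonneg
  have hK := tailConst_nonneg (n := n) hC hδ
  set D := (Q.dilate 2 two_pos).set
  have hD : MeasurableSet D := Cube.measurableSet_set _
  have hsplit : T f = T (D.indicator f) + T (Dᶜ.indicator f) := by
    rw [← hadd _ _ (hf.indicator hD) (hf.indicator hD.compl), Set.indicator_self_add_compl]
  have htail : ∀ z ∈ Q.set, |T (Dᶜ.indicator f) z - T (Dᶜ.indicator f) Q.center|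
      ≤ tailConst n C δ * A := fun z hz => by
    have hnhds : ∀ x ∈ Q.set, D ∈ 𝓝 x := fun x hx =>
      mem_interior_iff_mem_nhds.1 (Q.set_subset_interior_dilate two_pos one_lt_two hx)
    rw [← ENNReal.ofReal_le_ofReal_iff (by positivity), ← Real.enorm_eq_ofReal_abs,
      ENNReal.ofReal_mul hK, ← hMA]
    exact (hT2.enorm_sub_le hkm hf hD (hnhds z hz) (hnhds _ Q.center_mem)).trans
      (hker.lintegral_compl_dilate_two_le hC hδ hz Q.center_mem hy f)
  have hlocal :
      volume {z | c * A / 2 < |T (D.indicator f) z|} < ENNReal.ofReal s * volume Q.set := by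
    refine hT1.volume_lt_abs_lt (hf.indicator hD) hs hA
      (le_add_of_nonneg_left (mul_nonneg zero_le_two hK)) ?_
    have hind : (fun x => ENNReal.ofReal |D.indicator f x|)
        = D.indicator fun x => ENNReal.ofReal |f x| := by
      ext x; by_cases hx : x ∈ D <;> simp [hx]
    rw [hind, lintegral_indicator hD, ← hMA]
    exact lintegral_le_maximal_mul_volume f (Q.set_subset_dilate two_pos one_le_two hy)
  have hosc : osc (T f) s Q ≤ c * A := by
    refine osc_le (mul_nonneg hc.le hA) (T (Dᶜ.indicator f) Q.center)
      ((measure_mono ?_).trans_lt hlocal)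
    rintro z ⟨hz, hlt⟩
    have hfar := htail z hz
    have hKc : tailConst n C δ * A ≤ c * A / 2 := by
      have : 2 * tailConst n C δ ≤ c := le_add_of_nonneg_right (by positivity)
      nlinarith
    show c * A / 2 < |T (D.indicator f) z|
    rw [hsplit, Pi.add_apply, add_sub_assoc] at hlt
    linarith [abs_add_le (T (D.indicator f) z)
      (T (Dᶜ.indicator f) z - T (Dᶜ.indicator f) Q.center)]
  rw [hMA, ← ENNReal.ofReal_mul hc.le]
  exact ENNReal.ofReal_le_ofReal hosc

end Operator

/-- Let `k` be a kernel with the Hölder-type regularity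
`|k(x,y) − k(x',y)| ≤ C |x−x'|^δ / |x−y|^{n+δ}` for `x, x' ∈ Q`, `y ∉ 2Q`, and let `T`
be a linear operator on integrable functions of weak type (1,1) represented by `k` off
the support. Then for `0 < s ≤ 1/2` there is `c > 0` such that for every cube `Q₀`,
every integrable `f` and every `x ∈ Q₀`:
`M♯_{0,s,Q₀}(Tf)(x) ≤ c sup_{x ∈ Q ⊆ Q₀} inf_{y ∈ Q} Mf(y)`. -/
theorem statement4 {n : ℕ} (k : Sp n → Sp n → ℝ)
    (hkm : Measurable (Function.uncurry k)) (C δ : ℝ) (hC : 0 < C) (hδ : 0 < δ)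
    (hker : ∀ (Q : Cube n), ∀ x ∈ Q.set, ∀ x' ∈ Q.set,
      ∀ y ∉ (Q.dilate 2 (by norm_num)).set,
        |k x y - k x' y| ≤ C * ‖x - x'‖ ^ δ / ‖x - y‖ ^ ((n : ℝ) + δ))
    (T : (Sp n → ℝ) → (Sp n → ℝ))
    (hadd : ∀ g₁ g₂ : Sp n → ℝ, Integrable g₁ → Integrable g₂ → T (g₁ + g₂) = T g₁ + T g₂)
    (CT : ℝ)
    (hT1 : ∀ g : Sp n → ℝ, Integrable g → ∀ lam : ℝ, 0 < lam →
      volume {x | ENNReal.ofReal lam < ENNReal.ofReal |T g x|}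
        ≤ ENNReal.ofReal CT * (∫⁻ x, ENNReal.ofReal |g x|) / ENNReal.ofReal lam)
    (hT2 : ∀ g : Sp n → ℝ, Integrable g → ∀ x ∉ tsupport g, T g x = ∫ y, k x y * g y)
    (s : ℝ) (hs0 : 0 < s) :
    ∃ c : ℝ, 0 < c ∧
      ∀ (Q₀ : Cube n) (f : Sp n → ℝ), Integrable f → ∀ x ∈ Q₀.set,
        sharpLoc (T f) s Q₀ x ≤
          ENNReal.ofReal c *
            ⨆ Q : {Q : Cube n // x ∈ Q.set ∧ Q.set ⊆ Q₀.set},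
              ⨅ y : Q.1.set, maximal f ↑y := by
  have hc := sharpConst_pos (n := n) (CT := CT) hC.le hδ hs0
  refine ⟨sharpConst n C δ CT s, hc, fun Q₀ f hf x _ => iSup_le fun Q => ?_⟩
  calc ENNReal.ofReal (osc (T f) s Q.1)
      ≤ ENNReal.ofReal (sharpConst n C δ CT s) * ⨅ y : Q.1.set, maximal f y := by
        rw [ENNReal.mul_iInf_of_ne (ENNReal.ofReal_pos.2 hc).ne' ENNReal.ofReal_ne_top]
        exact le_iInf fun y =>
          ofReal_osc_le_sharpConst_mul_maximal hkm hC.le hδ hker hadd hT1 hT2 hs0 hf y.2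
    _ ≤ _ := by
        gcongr
        exact le_iSup (fun Q : {Q : Cube n // x ∈ Q.set ∧ Q.set ⊆ Q₀.set} =>
          ⨅ y : Q.1.set, maximal f y) Q

end LocalMedian
end

section
/- Let 0 < s < 1/2 and 1/2 ≤ t < 1−s. Then for every cube Q ⊂ ℝⁿ and every measurable function f on Q, m_{|f − m_f(t,Q)|}(t,Q) ≤ 4 · inf_{y ∈ Q} M♯_{0,s,Q}f(y). -/
/-!
If `|{y ∈ Q : |f y - c| > α}| < s|Q|` and `t + s ≤ 1`, no set of measure at most `t|Q|` can
contain all of `{y ∈ Q : |f y - c| ≤ α}`. Applied to sublevel sets this pins the median,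
`|m_f(t,Q) - c| ≤ α` (from below because `{f < c - α}` has measure `< s|Q| ≤ t|Q|`), and then the
triangle inequality gives `m_{|f - m_f(t,Q)|}(t,Q) ≤ 2α`. Minimising over `c` and `α` bounds the
left-hand side by twice the oscillation of `f` on `Q` itself, and `Q` is one of the cubes in the
supremum defining `M♯_{0,s,Q}f(y)` for every `y ∈ Q`.
-/

open MeasureTheory ENNReal

namespace LocalMedian

variable {n : ℕ}

open Filter Topology

section Measure

variable {α : Type*} [MeasurableSpace α] {μ : Measure α}

theorem tendsto_measure_sep_lt_atTop {A : Set α} {g : α → ℝ} (hg : Measurable g)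
    (hA : μ A ≠ ∞) : Tendsto (fun r : ℝ => μ {y ∈ A | r < g y}) atTop (𝓝 0) := by
  have hmeas : ∀ r : ℝ, MeasurableSet {y | r < g y} := fun r =>
    measurableSet_lt measurable_const hg
  have hrestrict : ∀ r : ℝ, μ {y ∈ A | r < g y} = μ.restrict A {y | r < g y} := fun r => by
    rw [Measure.restrict_apply (hmeas r), Set.inter_comm]
    rfl
  have hempty : ⋂ r : ℝ, {y | r < g y} = ∅ :=
    Set.eq_empty_of_forall_notMem fun y hy => lt_irrefl (g y) (Set.mem_iInter.1 hy (g y))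
  have : IsFiniteMeasure (μ.restrict A) := isFiniteMeasure_restrict.2 hA
  have hlim := tendsto_measure_iInter_atTop (μ := μ.restrict A)
    (fun r => (hmeas r).nullMeasurableSet) (fun r r' hrr' y hy => hrr'.trans_lt hy)
    ⟨0, measure_ne_top _ _⟩
  rw [hempty, measure_empty] at hlim
  simp only [hrestrict]
  exact hlim

theorem mul_measure_lt_of_subset_union {A T E : Set α} {a b : ℝ≥0∞} (hab : a + b ≤ 1)
    (hA : μ A ≠ ∞) (hE : μ E < b * μ A) (hcover : A ⊆ T ∪ E) : a * μ A < μ T := by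
  by_contra! hT
  have haA : a * μ A ≠ ∞ :=
    mul_ne_top (ne_top_of_le_ne_top one_ne_top (le_self_add.trans hab)) hA
  have : μ A < μ A :=
    calc μ A ≤ μ T + μ E := (measure_mono hcover).trans (measure_union_le T E)
      _ < a * μ A + b * μ A := ENNReal.add_lt_add_of_le_of_lt (ne_top_of_le_ne_top haA hT) hT hE
      _ = (a + b) * μ A := (add_mul a b (μ A)).symm
      _ ≤ μ A := mul_le_of_le_one_left zero_le hab
  exact lt_irrefl _ this

end Measure

theorem volume_cube (Q : Cube n) : volume Q.set = ENNReal.ofReal Q.side ^ n := by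
  have hset : Q.set = (MeasurableEquiv.toLp 2 (Fin n → ℝ)).symm ⁻¹'
      Set.univ.pi fun i => Set.Icc (Q.corner i) (Q.corner i + Q.side) := by
    ext x
    exact ⟨fun h i _ => h i, fun h i => h i (Set.mem_univ i)⟩
  rw [hset, (EuclideanSpace.volume_preserving_symm_measurableEquiv_toLp (Fin n)).measure_preimage
      (MeasurableSet.univ_pi fun _ => measurableSet_Icc).nullMeasurableSet, volume_pi_pi]
  simp [Real.volume_Icc]

theorem volume_cube_pos (Q : Cube n) : 0 < volume Q.set := by
  rw [volume_cube]
  exact ENNReal.pow_pos (ENNReal.ofReal_pos.2 Q.side_pos) n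

theorem volume_cube_ne_top (Q : Cube n) : volume Q.set ≠ ∞ := by
  rw [volume_cube]
  exact pow_ne_top ofReal_ne_top

/-- `median g t Q = sSup (medianSet g t Q)` and `osc f s Q = ⨅ c, sInf (oscSet f s Q c)`
hold by `rfl`. -/
def medianSet (g : Sp n → ℝ) (t : ℝ) (Q : Cube n) : Set ℝ :=
  {M | volume {y ∈ Q.set | g y < M} ≤ ENNReal.ofReal t * volume Q.set}

def oscSet (f : Sp n → ℝ) (s : ℝ) (Q : Cube n) (c : ℝ) : Set ℝ :=
  {α | 0 ≤ α ∧ volume {y ∈ Q.set | α < |f y - c|} < ENNReal.ofReal s * volume Q.set}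

variable {Q : Cube n} {f g : Sp n → ℝ} {s t c α β : ℝ}

theorem le_of_mem_medianSet (hs : 0 ≤ s) (ht : 0 ≤ t) (hts : t + s ≤ 1)
    (hβ : volume {y ∈ Q.set | β < g y} < ENNReal.ofReal s * volume Q.set) {M : ℝ}
    (hM : M ∈ medianSet g t Q) : M ≤ β := by
  by_contra! hβM
  have hcover : Q.set ⊆ {y ∈ Q.set | g y < M} ∪ {y ∈ Q.set | β < g y} := fun y hy =>
    (lt_or_ge β (g y)).elim (fun h => Or.inr ⟨hy, h⟩) fun h => Or.inl ⟨hy, h.trans_lt hβM⟩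
  have hab : ENNReal.ofReal t + ENNReal.ofReal s ≤ 1 := by
    rw [← ofReal_add ht hs]
    exact ofReal_le_one.2 hts
  exact (mul_measure_lt_of_subset_union hab (volume_cube_ne_top Q) hβ hcover).not_ge hM

theorem median_le_of_volume_lt (hs : 0 ≤ s) (ht : 0 ≤ t) (hts : t + s ≤ 1) (hβ₀ : 0 ≤ β)
    (hβ : volume {y ∈ Q.set | β < g y} < ENNReal.ofReal s * volume Q.set) :
    median g t Q ≤ β :=
  Real.sSup_le (fun _ => le_of_mem_medianSet hs ht hts hβ) hβ₀

theorem abs_median_sub_le (hs : 0 ≤ s) (hst : s ≤ t) (hts : t + s ≤ 1)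
    (hα : α ∈ oscSet f s Q c) : |median f t Q - c| ≤ α := by
  obtain ⟨-, hαE⟩ := hα
  have hupper : ∀ M ∈ medianSet f t Q, M ≤ c + α := by
    refine fun M => le_of_mem_medianSet hs (hs.trans hst) hts ((measure_mono ?_).trans_lt hαE)
    exact fun y ⟨hy, hlt⟩ => ⟨hy, lt_abs.2 (Or.inl (by linarith))⟩
  have hlower : c - α ∈ medianSet f t Q := by
    have hsub : {y ∈ Q.set | f y < c - α} ⊆ {y ∈ Q.set | α < |f y - c|} :=
      fun y ⟨hy, hlt⟩ => ⟨hy, lt_abs.2 (Or.inr (by linarith))⟩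
    calc volume {y ∈ Q.set | f y < c - α}
        ≤ volume {y ∈ Q.set | α < |f y - c|} := measure_mono hsub
      _ ≤ ENNReal.ofReal s * volume Q.set := hαE.le
      _ ≤ ENNReal.ofReal t * volume Q.set := by gcongr
  have h₁ : c - α ≤ median f t Q := le_csSup ⟨c + α, hupper⟩ hlower
  have h₂ : median f t Q ≤ c + α := csSup_le ⟨c - α, hlower⟩ hupper
  exact abs_sub_le_iff.2 ⟨by linarith, by linarith⟩

theorem median_abs_sub_median_le (hs : 0 ≤ s) (hst : s ≤ t) (hts : t + s ≤ 1)
    (hα : α ∈ oscSet f s Q c) : median (fun y => |f y - median f t Q|) t Q ≤ 2 * α := by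
  have hm := abs_median_sub_le hs hst hts hα
  obtain ⟨hα₀, hαE⟩ := hα
  refine median_le_of_volume_lt hs (hs.trans hst) hts (by linarith)
    ((measure_mono ?_).trans_lt hαE)
  rintro y ⟨hy, hlt⟩
  have htri : |f y - median f t Q| ≤ |f y - c| + |median f t Q - c| := by
    simpa only [abs_sub_comm c] using abs_sub_le (f y) c (median f t Q)
  exact ⟨hy, by linarith⟩

theorem oscSet_nonempty (hs : 0 < s) (hf : Measurable f) (c : ℝ) :
    (oscSet f s Q c).Nonempty := by
  have hpos : 0 < ENNReal.ofReal s * volume Q.set :=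
    ENNReal.mul_pos (ENNReal.ofReal_pos.2 hs).ne' (volume_cube_pos Q).ne'
  obtain ⟨r, hr, hr₀⟩ := (((tendsto_measure_sep_lt_atTop (hf.sub_const c).abs
    (volume_cube_ne_top Q)).eventually_lt_const hpos).and (eventually_ge_atTop 0)).exists
  exact ⟨r, hr₀, hr⟩

theorem median_abs_sub_median_le_two_mul_osc (hs : 0 < s) (hst : s ≤ t) (hts : t + s ≤ 1)
    (hf : Measurable f) : median (fun y => |f y - median f t Q|) t Q ≤ 2 * osc f s Q := by
  have hhalf : ∀ c, median (fun y => |f y - median f t Q|) t Q / 2 ≤ sInf (oscSet f s Q c) :=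
    fun c => le_csInf (oscSet_nonempty hs hf c) fun α hα => by
      linarith [median_abs_sub_median_le hs.le hst hts hα]
  have : median (fun y => |f y - median f t Q|) t Q / 2 ≤ osc f s Q := le_ciInf hhalf
  linarith

theorem ofReal_osc_le_sharpLoc {x : Sp n} (hx : x ∈ Q.set) :
    ENNReal.ofReal (osc f s Q) ≤ sharpLoc f s Q x :=
  le_iSup (fun Q' : {Q' : Cube n // x ∈ Q'.set ∧ Q'.set ⊆ Q.set} =>
    ENNReal.ofReal (osc f s Q'.1)) ⟨Q, hx, subset_rfl⟩

theorem statement13_general {n : ℕ} (s t : ℝ) (hs0 : 0 < s)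
    (ht : 1 / 2 ≤ t) (ht1 : t < 1 - s)
    (Q : Cube n) (f : Sp n → ℝ) (hf : Measurable f) :
    ENNReal.ofReal (median (fun y => |f y - median f t Q|) t Q)
      ≤ 4 * ⨅ y : Q.set, sharpLoc f s Q ↑y := by
  have hosc := median_abs_sub_median_le_two_mul_osc (Q := Q) hs0 (by linarith) (by linarith) hf
  calc ENNReal.ofReal (median (fun y => |f y - median f t Q|) t Q)
      ≤ ENNReal.ofReal (2 * osc f s Q) := ENNReal.ofReal_le_ofReal hosc
    _ = 2 * ENNReal.ofReal (osc f s Q) := by rw [ENNReal.ofReal_mul zero_le_two, ofReal_ofNat]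
    _ ≤ 4 * ⨅ y : Q.set, sharpLoc f s Q ↑y := by
      gcongr
      · norm_num
      · exact le_iInf fun y => ofReal_osc_le_sharpLoc y.2

/-- Let `0 < s < 1/2` and `1/2 ≤ t < 1 − s`. For every cube `Q ⊂ ℝⁿ`
and every measurable `f`:
`m_{|f − m_f(t,Q)|}(t,Q) ≤ 4 inf_{y ∈ Q} M♯_{0,s,Q}f(y)`. -/
theorem statement13 {n : ℕ} (s t : ℝ) (hs0 : 0 < s) (hs : s < 1 / 2)
    (ht : 1 / 2 ≤ t) (ht1 : t < 1 - s)
    (Q : Cube n) (f : Sp n → ℝ) (hf : Measurable f) :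
    ENNReal.ofReal (median (fun y => |f y - median f t Q|) t Q)
      ≤ 4 * ⨅ y : Q.set, sharpLoc f s Q ↑y :=
  statement13_general s t hs0 ht ht1 Q f hf

end LocalMedian
end
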